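/- arXiv:1506.07393 — 2 statements merged into one kernel-verified Lean document; each statement's English description precedes it below -/
import Mathlib

section
/- Let g : [0,∞) → ℝ be a positive, increasing, differentiable function, let p be a positive integer, let q ∈ (0,1), and let λ ≥ μ > 0 be real numbers. Then the function G(t) = (1−q)^{λ g(t)}·[p]_q^{μ g(t)}·Γ_q(g(t))^λ / Γ_{(p,q)}(g(t))^μ is non-increasing on [0,∞); that is, for all 0 ≤ s ≤ t we have G(s) ≥ G(t). -/
open Real

/-- `[p]_q = (1 - q^p)/(1 - q)` -/
noncomputable def pnq (p : ℕ) (q : ℝ) : ℝ := (1 - q ^ p) / (1 - q)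

/-- q-psi function via its series representation. -/
noncomputable def psiq (q s : ℝ) : ℝ :=
  -Real.log (1 - q) + Real.log q * ∑' n : ℕ, q ^ (((n : ℝ) + 1) * s) / (1 - q ^ (n + 1))

/-- (p,q)-psi function via its series representation. -/
noncomputable def psipq (p : ℕ) (q s : ℝ) : ℝ :=
  Real.log (pnq p q) +
    Real.log q * ∑ n ∈ Finset.range p, q ^ (((n : ℝ) + 1) * s) / (1 - q ^ (n + 1))

/-- k-psi function via its series representation. -/
noncomputable def psik (k s : ℝ) : ℝ :=
  (Real.log k - Real.eulerMascheroniConstant) / k - 1 / s +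
    ∑' n : ℕ, s / (((n : ℝ) + 1) * k * (((n : ℝ) + 1) * k + s))

/-- (q,k)-psi function via its series representation. -/
noncomputable def psiqk (q k s : ℝ) : ℝ :=
  -Real.log (1 - q) / k +
    Real.log q * ∑' n : ℕ, q ^ (((n : ℝ) + 1) * k * s) / (1 - q ^ (((n : ℝ) + 1) * k))

/-- Normalized q-Gamma function. -/
noncomputable def Gammaq (q s : ℝ) : ℝ :=
  (1 - q) ^ (-s) *
    Real.exp (∑' n : ℕ, q ^ (((n : ℝ) + 1) * s) / (((n : ℝ) + 1) * (1 - q ^ (n + 1))))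

/-- Normalized (p,q)-Gamma function. -/
noncomputable def Gammapq (p : ℕ) (q s : ℝ) : ℝ :=
  (pnq p q) ^ s *
    Real.exp (∑ n ∈ Finset.range p, q ^ (((n : ℝ) + 1) * s) / (((n : ℝ) + 1) * (1 - q ^ (n + 1))))

/-- Normalized (q,k)-Gamma function. -/
noncomputable def Gammaqk (q k s : ℝ) : ℝ :=
  (1 - q) ^ (-s / k) *
    Real.exp (∑' n : ℕ,
      q ^ (((n : ℝ) + 1) * k * s) / (((n : ℝ) + 1) * k * (1 - q ^ (((n : ℝ) + 1) * k))))

/-- k-Gamma function. -/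
noncomputable def Gammak (k s : ℝ) : ℝ :=
  ∫ x in Set.Ioi (0 : ℝ), Real.exp (-(x ^ k) / k) * x ^ (s - 1)


noncomputable def qterm (q x : ℝ) (n : ℕ) : ℝ :=
  q ^ (((n : ℝ) + 1) * x) / (((n : ℝ) + 1) * (1 - q ^ (n + 1)))

lemma qterm_nonneg {q : ℝ} (hq : q ∈ Set.Ioo (0:ℝ) 1) (x : ℝ) (n : ℕ) :
    0 ≤ qterm q x n := by
  obtain ⟨h0, h1⟩ := hq
  have hqn : q ^ (n+1) < 1 := pow_lt_one₀ h0.le h1 (Nat.succ_ne_zero n)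
  exact div_nonneg (Real.rpow_nonneg h0.le _)
    (mul_nonneg (by positivity) (by linarith))

lemma qterm_summable {q : ℝ} (hq : q ∈ Set.Ioo (0:ℝ) 1) {x : ℝ} (hx : 0 < x) :
    Summable (qterm q x) := by
  obtain ⟨h0, h1⟩ := hq
  have hr0 : (0:ℝ) ≤ q ^ x := (Real.rpow_pos_of_pos h0 x).le
  have hr1 : q ^ x < 1 := Real.rpow_lt_one h0.le h1 hx
  apply Summable.of_nonneg_of_le (qterm_nonneg ⟨h0,h1⟩ x)
    (f := fun n => (q ^ x) ^ (n+1) / (1 - q))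
  · intro n
    have hqn : q ^ (n+1) < 1 := pow_lt_one₀ h0.le h1 (Nat.succ_ne_zero n)
    have hnum : q ^ (((n : ℝ) + 1) * x) = (q ^ x) ^ (n+1) := by
      rw [← Real.rpow_natCast (q ^ x) (n+1), ← Real.rpow_mul h0.le]
      push_cast
      ring_nf
    rw [qterm, hnum]
    have hden : (1 - q) ≤ ((n:ℝ)+1) * (1 - q ^ (n+1)) := by
      have h1q : 1 - q ^ (n+1) ≥ 1 - q := by
        have : q ^ (n+1) ≤ q := by
          calc q ^ (n+1) ≤ q ^ 1 := pow_le_pow_of_le_one h0.le h1.le (by omega)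
          _ = q := pow_one q
        linarith
      nlinarith [Nat.cast_nonneg (α := ℝ) n]
    exact div_le_div_of_nonneg_left (by positivity)
      (by nlinarith [Nat.cast_nonneg (α := ℝ) n]) hden
  · have : Summable (fun n : ℕ => (q ^ x) ^ n) := summable_geometric_of_lt_one hr0 hr1
    exact ((this.mul_right ((1-q)⁻¹)).comp_injective (add_left_injective 1)).congr
      (fun n => by simp [div_eq_mul_inv])

lemma qterm_anti {q : ℝ} (hq : q ∈ Set.Ioo (0:ℝ) 1) {u v : ℝ} (huv : u ≤ v) (n : ℕ) :
    qterm q v n ≤ qterm q u n := by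
  obtain ⟨h0, h1⟩ := hq
  have hqn : q ^ (n+1) < 1 := pow_lt_one₀ h0.le h1 (Nat.succ_ne_zero n)
  have hden : (0:ℝ) ≤ ((n:ℝ)+1) * (1 - q ^ (n+1)) :=
    mul_nonneg (by positivity) (by linarith)
  apply div_le_div_of_nonneg_right ?_ hden
  exact Real.rpow_le_rpow_of_exponent_ge h0 h1.le
    (by nlinarith [Nat.cast_nonneg (α := ℝ) n])

lemma pnq_pos {q : ℝ} (hq : q ∈ Set.Ioo (0:ℝ) 1) {p : ℕ} (hp : 0 < p) : 0 < pnq p q := by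
  obtain ⟨h0, h1⟩ := hq
  have : q ^ p < 1 := pow_lt_one₀ h0.le h1 hp.ne'
  exact div_pos (by linarith) (by linarith)

lemma key_eq {q : ℝ} (hq : q ∈ Set.Ioo (0:ℝ) 1) {p : ℕ} (hp : 0 < p) (lam mu x : ℝ) :
    (1 - q) ^ (lam * x) * (pnq p q) ^ (mu * x) * (Gammaq q x) ^ lam /
        (Gammapq p q x) ^ mu =
      Real.exp (lam * (∑' n : ℕ, qterm q x n) -
        mu * (∑ n ∈ Finset.range p, qterm q x n)) := by
  obtain ⟨h0, h1⟩ := hq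
  have hc : (0:ℝ) < 1 - q := by linarith
  have hd : 0 < pnq p q := pnq_pos ⟨h0, h1⟩ hp
  set A := ∑' n : ℕ, qterm q x n with hA
  set B := ∑ n ∈ Finset.range p, qterm q x n with hB
  have hGq : Gammaq q x = (1 - q) ^ (-x) * Real.exp A := rfl
  have hGpq : Gammapq p q x = (pnq p q) ^ x * Real.exp B := rfl
  rw [hGq, hGpq, Real.mul_rpow (Real.rpow_nonneg hc.le _) (Real.exp_pos _).le,
    Real.mul_rpow (Real.rpow_nonneg hd.le _) (Real.exp_pos _).le,
    ← Real.rpow_mul hc.le, ← Real.rpow_mul hd.le, ← Real.exp_mul, ← Real.exp_mul,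
    show -x * lam = -(lam * x) by ring, Real.rpow_neg hc.le,
    show x * mu = mu * x by ring,
    show lam * A - mu * B = A * lam - B * mu by ring, Real.exp_sub]
  have h1' : (1 - q) ^ (lam * x) ≠ 0 := (Real.rpow_pos_of_pos hc _).ne'
  have h2' : (pnq p q) ^ (mu * x) ≠ 0 := (Real.rpow_pos_of_pos hd _).ne'
  field_simp

theorem stmt8 (g : ℝ → ℝ) (hgpos : ∀ t ∈ Set.Ici (0 : ℝ), 0 < g t)
    (hgmono : MonotoneOn g (Set.Ici (0 : ℝ)))
    (hgdiff : DifferentiableOn ℝ g (Set.Ici (0 : ℝ)))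
    (p : ℕ) (hp : 0 < p) (q : ℝ) (hq : q ∈ Set.Ioo (0 : ℝ) 1)
    (lam mu : ℝ) (hmu : 0 < mu) (hlm : mu ≤ lam) :
    ∀ s t : ℝ, 0 ≤ s → s ≤ t →
      (1 - q) ^ (lam * g t) * (pnq p q) ^ (mu * g t) * (Gammaq q (g t)) ^ lam /
          (Gammapq p q (g t)) ^ mu ≤
        (1 - q) ^ (lam * g s) * (pnq p q) ^ (mu * g s) * (Gammaq q (g s)) ^ lam /
          (Gammapq p q (g s)) ^ mu := by
  intro s t hs hst
  have hts : (0:ℝ) ≤ t := hs.trans hst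
  have hgs : 0 < g s := hgpos s hs
  have hgt : 0 < g t := hgpos t hts
  have hgst : g s ≤ g t := hgmono hs hts hst
  rw [key_eq hq hp lam mu (g t), key_eq hq hp lam mu (g s), Real.exp_le_exp]
  have hSs := qterm_summable hq hgs
  have hSt := qterm_summable hq hgt
  have hA : (∑' n : ℕ, qterm q (g t) n) ≤ ∑' n : ℕ, qterm q (g s) n :=
    Summable.tsum_le_tsum (qterm_anti hq hgst) hSt hSs
  have hT : (∑' n : ℕ, qterm q (g t) (n + p)) ≤ ∑' n : ℕ, qterm q (g s) (n + p) :=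
    Summable.tsum_le_tsum (fun n => qterm_anti hq hgst _)
      ((summable_nat_add_iff p).mpr hSt) ((summable_nat_add_iff p).mpr hSs)
  have eT := Summable.sum_add_tsum_nat_add (f := qterm q (g t)) p hSt
  have eS := Summable.sum_add_tsum_nat_add (f := qterm q (g s)) p hSs
  have hBt : (∑ n ∈ Finset.range p, qterm q (g t) n) =
      (∑' n : ℕ, qterm q (g t) n) - ∑' n : ℕ, qterm q (g t) (n + p) := by linarith
  have hBs : (∑ n ∈ Finset.range p, qterm q (g s) n) =
      (∑' n : ℕ, qterm q (g s) n) - ∑' n : ℕ, qterm q (g s) (n + p) := by linarith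
  rw [hBt, hBs]
  nlinarith [mul_le_mul_of_nonneg_left hT hmu.le,
    mul_le_mul_of_nonneg_left hA (sub_nonneg.mpr hlm)]
end

section
/- Let α > 0 and β > 0 be real numbers, let k > 0, let q ∈ (0,1), and let λ > 0 and μ > 0 be real numbers. Then for all x, y with 0 < x < y < 1, the following strict double inequality holds: α^λ·e^{−(λγ/k)βx}·Γ_k(α)^λ / ((α+βx)^λ·k^{−(λ/k)βx}·(1−q)^{−(μ/k)βx}·Γ_{(q,k)}(α)^μ) < Γ_k(α+βx)^λ / Γ_{(q,k)}(α+βx)^μ < (α+βy)^λ·e^{(λγ/k)β(y−x)}·Γ_k(α+βy)^λ / ((α+βx)^λ·k^{(λ/k)β(y−x)}·(1−q)^{(μ/k)β(y−x)}·Γ_{(q,k)}(α+βy)^μ). -/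
open Real

/-!
Taking logarithms, both inequalities say that
`s ↦ λ (log Γ_k s + log s + (s/k) (γ - log k)) - μ (log Γ_{(q,k)} s + (s/k) log (1 - q))`
is strictly increasing on `(0, ∞)`, applied to `a < a + b x` and to `a + b x < a + b y`.
Since `Γ_k s = k ^ (s/k - 1) Γ(s/k)`, the first bracket is `g (s/k)` with
`g v = log Γ(v + 1) + γ v`, and `g` is strictly increasing because `log Γ` is strictly convex
with derivative `-γ` at `1`. The second bracket is the series
`∑ q^{nks} / (nk (1 - q^{nk}))`, whose terms are strictly decreasing in `s`.
-/

open Set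

namespace Real

lemma differentiableAt_log_Gamma {x : ℝ} (hx : 0 < x) : DifferentiableAt ℝ (log ∘ Gamma) x :=
  (differentiableAt_Gamma fun m ↦ by linarith [(m.cast_nonneg : (0 : ℝ) ≤ m)]).log
    (Gamma_pos_of_pos hx).ne'

lemma deriv_log_Gamma_one : deriv (log ∘ Gamma) 1 = -eulerMascheroniConstant := by
  simpa [Function.comp_def, Gamma_one] using (hasDerivAt_Gamma_one.log (by simp [Gamma_one])).deriv

theorem strictConvexOn_log_Gamma : StrictConvexOn ℝ (Ioi 0) (log ∘ Gamma) := by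
  have hshift : ConvexOn ℝ (Ioi 0) (fun x ↦ log (Gamma (x + 1))) :=
    (convexOn_log_Gamma.translate_left 1).subset (fun x (hx : 0 < x) ↦ by
      simp only [mem_preimage, mem_Ioi]; linarith) (convex_Ioi 0)
  refine (hshift.add_strictConvexOn strictConcaveOn_log_Ioi.neg).congr fun x (hx : 0 < x) ↦ ?_
  simp [Gamma_add_one hx.ne', log_mul hx.ne' (Gamma_pos_of_pos hx).ne']

lemma neg_eulerMascheroniConstant_lt_slope_log_Gamma {x y : ℝ} (hx : 1 ≤ x) (hxy : x < y) :
    -eulerMascheroniConstant < slope (log ∘ Gamma) x y := by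
  have hdiff : ∀ z ∈ Ioi (0 : ℝ), DifferentiableAt ℝ (log ∘ Gamma) z :=
    fun z hz ↦ differentiableAt_log_Gamma hz
  have hx0 : x ∈ Ioi 0 := mem_Ioi.2 (by linarith)
  calc -eulerMascheroniConstant = deriv (log ∘ Gamma) 1 := deriv_log_Gamma_one.symm
    _ ≤ deriv (log ∘ Gamma) x :=
      (strictConvexOn_log_Gamma.strictMonoOn_deriv hdiff).monotoneOn (mem_Ioi.2 one_pos) hx0 hx
    _ < slope (log ∘ Gamma) x y :=
      strictConvexOn_log_Gamma.deriv_lt_slope hx0 (mem_Ioi.2 (by linarith)) hxy (hdiff x hx0)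

theorem strictMonoOn_log_Gamma_add_log_add_mul :
    StrictMonoOn (fun v ↦ log (Gamma v) + log v + eulerMascheroniConstant * v) (Ioi 0) := by
  intro u (hu : 0 < u) v (hv : 0 < v) huv
  have hslope := neg_eulerMascheroniConstant_lt_slope_log_Gamma (x := u + 1) (y := v + 1)
    (by linarith) (by linarith)
  have hlog (w : ℝ) (hw : 0 < w) : log (Gamma w) + log w = log (Gamma (w + 1)) := by
    rw [Gamma_add_one hw.ne', log_mul hw.ne' (Gamma_pos_of_pos hw).ne', add_comm]
  rw [slope_def_field, lt_div_iff₀ (by linarith)] at hslope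
  simp only [Function.comp_apply] at hslope
  simp only [hlog u hu, hlog v hv]
  linarith

end Real

lemma Gammak_eq_rpow_mul_Gamma {k s : ℝ} (hk : 0 < k) (hs : 0 < s) :
    Gammak k s = k ^ (s / k - 1) * Real.Gamma (s / k) := by
  have h := integral_rpow_mul_exp_neg_mul_rpow hk (by linarith : -1 < s - 1) (inv_pos.2 hk)
  rw [sub_add_cancel, inv_rpow hk.le, ← rpow_neg hk.le, neg_div, neg_neg] at h
  rw [Gammak, rpow_sub hk, rpow_one]
  convert h using 1
  · congr 1; ext x
    rw [mul_comm, neg_div, neg_mul, inv_mul_eq_div]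
  · ring

lemma Gammak_pos {k s : ℝ} (hk : 0 < k) (hs : 0 < s) : 0 < Gammak k s := by
  rw [Gammak_eq_rpow_mul_Gamma hk hs]
  exact mul_pos (rpow_pos_of_pos hk _) (Gamma_pos_of_pos (div_pos hs hk))

theorem strictMonoOn_log_Gammak_add_log_add_mul {k : ℝ} (hk : 0 < k) :
    StrictMonoOn (fun s ↦ log (Gammak k s) + log s + s / k * (eulerMascheroniConstant - log k))
      (Ioi 0) := by
  refine (strictMonoOn_log_Gamma_add_log_add_mul.comp
    (fun s _ t _ hst ↦ div_lt_div_of_pos_right hst hk) fun s (hs : 0 < s) ↦ div_pos hs hk).congr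
    fun s (hs : 0 < s) ↦ ?_
  simp only [Function.comp_apply]
  rw [Gammak_eq_rpow_mul_Gamma hk hs, log_mul (rpow_pos_of_pos hk _).ne'
    (Gamma_pos_of_pos (div_pos hs hk)).ne', log_rpow hk, log_div hs.ne' hk.ne']
  ring

section qkGamma

variable {q k : ℝ}

lemma mul_one_sub_rpow_le (hq0 : 0 < q) (hq1 : q < 1) (hk : 0 < k) (n : ℕ) :
    k * (1 - q ^ k) ≤ ((n : ℝ) + 1) * k * (1 - q ^ (((n : ℝ) + 1) * k)) := by
  have hn : (1 : ℝ) ≤ n + 1 := by linarith [(n.cast_nonneg : (0 : ℝ) ≤ n)]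
  have hqk : q ^ (((n : ℝ) + 1) * k) ≤ q ^ k :=
    rpow_le_rpow_of_exponent_ge hq0 hq1.le (le_mul_of_one_le_left hk.le hn)
  have hk1 : 0 < 1 - q ^ k := sub_pos.2 (rpow_lt_one hq0.le hq1 hk)
  calc k * (1 - q ^ k) ≤ ((n : ℝ) + 1) * k * (1 - q ^ k) := by
        rw [mul_assoc]; exact le_mul_of_one_le_left (mul_pos hk hk1).le hn
    _ ≤ _ := by gcongr

lemma summable_Gammaqk_series (hq0 : 0 < q) (hq1 : q < 1) (hk : 0 < k) {s : ℝ} (hs : 0 < s) :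
    Summable fun n : ℕ ↦
      q ^ (((n : ℝ) + 1) * k * s) / (((n : ℝ) + 1) * k * (1 - q ^ (((n : ℝ) + 1) * k))) := by
  have hden : 0 < k * (1 - q ^ k) := mul_pos hk (sub_pos.2 (rpow_lt_one hq0.le hq1 hk))
  have hr : q ^ (k * s) < 1 := rpow_lt_one hq0.le hq1 (by positivity)
  have hgeom : Summable fun n : ℕ ↦ (q ^ (k * s)) ^ (n + 1) / (k * (1 - q ^ k)) :=
    ((summable_geometric_of_lt_one (by positivity) hr).mul_left (q ^ (k * s))).div_const _
      |>.congr fun n ↦ by rw [pow_succ']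
  refine Summable.of_nonneg_of_le (fun n ↦ ?_) (fun n ↦ ?_) hgeom
  · exact div_nonneg (by positivity) (hden.le.trans (mul_one_sub_rpow_le hq0 hq1 hk n))
  · rw [← rpow_natCast, ← rpow_mul hq0.le]
    push_cast
    rw [show k * s * ((n : ℝ) + 1) = ((n : ℝ) + 1) * k * s by ring]
    exact div_le_div_of_nonneg_left (by positivity) hden (mul_one_sub_rpow_le hq0 hq1 hk n)

lemma strictAntiOn_Gammaqk_series (hq0 : 0 < q) (hq1 : q < 1) (hk : 0 < k) :
    StrictAntiOn (fun s : ℝ ↦ ∑' n : ℕ,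
      q ^ (((n : ℝ) + 1) * k * s) / (((n : ℝ) + 1) * k * (1 - q ^ (((n : ℝ) + 1) * k))))
      (Ioi 0) := by
  intro s (hs : 0 < s) t (ht : 0 < t) hst
  have hden (n : ℕ) : 0 < ((n : ℝ) + 1) * k * (1 - q ^ (((n : ℝ) + 1) * k)) :=
    (mul_pos hk (sub_pos.2 (rpow_lt_one hq0.le hq1 hk))).trans_le
      (mul_one_sub_rpow_le hq0 hq1 hk n)
  have hterm (n : ℕ) : q ^ (((n : ℝ) + 1) * k * t) < q ^ (((n : ℝ) + 1) * k * s) :=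
    rpow_lt_rpow_of_exponent_gt hq0 hq1 (by gcongr)
  exact (summable_Gammaqk_series hq0 hq1 hk ht).tsum_lt_tsum
    (fun n ↦ div_le_div_of_nonneg_right (hterm n).le (hden n).le)
    (div_lt_div_of_pos_right (hterm 0) (hden 0)) (summable_Gammaqk_series hq0 hq1 hk hs)

lemma Gammaqk_pos (hq1 : q < 1) (s : ℝ) : 0 < Gammaqk q k s :=
  mul_pos (rpow_pos_of_pos (sub_pos.2 hq1) _) (exp_pos _)

theorem strictAntiOn_log_Gammaqk_add_mul (hq0 : 0 < q) (hq1 : q < 1) (hk : 0 < k) :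
    StrictAntiOn (fun s ↦ log (Gammaqk q k s) + s / k * log (1 - q)) (Ioi 0) := by
  refine (strictAntiOn_Gammaqk_series hq0 hq1 hk).congr fun s _ ↦ ?_
  rw [Gammaqk, log_mul (rpow_pos_of_pos (sub_pos.2 hq1) _).ne' (exp_pos _).ne',
    log_rpow (sub_pos.2 hq1), log_exp]
  ring

end qkGamma

theorem strictMonoOn_mul_log_Gammak_sub_mul_log_Gammaqk {q k lam mu : ℝ} (hq0 : 0 < q)
    (hq1 : q < 1) (hk : 0 < k) (hlam : 0 < lam) (hmu : 0 < mu) :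
    StrictMonoOn (fun s ↦
      lam * (log (Gammak k s) + log s + s / k * (eulerMascheroniConstant - log k)) -
        mu * (log (Gammaqk q k s) + s / k * log (1 - q))) (Ioi 0) := by
  intro s hs t ht hst
  linarith [mul_lt_mul_of_pos_left (strictMonoOn_log_Gammak_add_log_add_mul hk hs ht hst) hlam,
    mul_lt_mul_of_pos_left (strictAntiOn_log_Gammaqk_add_mul hq0 hq1 hk hs ht hst) hmu]

theorem stmt15_general (a b : ℝ) (ha : 0 < a) (hb : 0 < b)
    (k : ℝ) (hk : 0 < k) (q : ℝ) (hq : q ∈ Set.Ioo (0 : ℝ) 1)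
    (lam mu : ℝ) (hlam : 0 < lam) (hmu : 0 < mu)
    (x y : ℝ) (hx : 0 < x) (hxy : x < y) :
    a ^ lam * Real.exp (-(lam * Real.eulerMascheroniConstant / k * b * x)) *
        (Gammak k a) ^ lam /
        ((a + b * x) ^ lam * k ^ (-(lam / k * b * x)) * (1 - q) ^ (-(mu / k * b * x)) *
          (Gammaqk q k a) ^ mu) <
      (Gammak k (a + b * x)) ^ lam / (Gammaqk q k (a + b * x)) ^ mu ∧
    (Gammak k (a + b * x)) ^ lam / (Gammaqk q k (a + b * x)) ^ mu <
      (a + b * y) ^ lam * Real.exp (lam * Real.eulerMascheroniConstant / k * b * (y - x)) *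
        (Gammak k (a + b * y)) ^ lam /
        ((a + b * x) ^ lam * k ^ (lam / k * b * (y - x)) * (1 - q) ^ (mu / k * b * (y - x)) *
          (Gammaqk q k (a + b * y)) ^ mu) := by
  obtain ⟨hq0, hq1⟩ := hq
  have hbx : 0 < b * x := mul_pos hb hx
  have hbxy : b * x < b * y := mul_lt_mul_of_pos_left hxy hb
  have hax : 0 < a + b * x := by linarith
  have hay : 0 < a + b * y := by linarith
  have hmono := strictMonoOn_mul_log_Gammak_sub_mul_log_Gammaqk hq0 hq1 hk hlam hmu
  have h₁ := hmono ha hax (by linarith : a < a + b * x)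
  have h₂ := hmono hax hay (by linarith : a + b * x < a + b * y)
  simp only [rpow_def_of_pos ha, rpow_def_of_pos hax, rpow_def_of_pos hay, rpow_def_of_pos hk,
    rpow_def_of_pos (sub_pos.2 hq1), rpow_def_of_pos (Gammak_pos hk ha),
    rpow_def_of_pos (Gammak_pos hk hax), rpow_def_of_pos (Gammak_pos hk hay),
    rpow_def_of_pos (Gammaqk_pos hq1 _), ← exp_add, ← exp_sub, exp_lt_exp]
  exact ⟨by linear_combination h₁, by linear_combination h₂⟩

theorem stmt15 (a b : ℝ) (ha : 0 < a) (hb : 0 < b)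
    (k : ℝ) (hk : 0 < k) (q : ℝ) (hq : q ∈ Set.Ioo (0 : ℝ) 1)
    (lam mu : ℝ) (hlam : 0 < lam) (hmu : 0 < mu)
    (x y : ℝ) (hx : 0 < x) (hxy : x < y) (hy : y < 1) :
    a ^ lam * Real.exp (-(lam * Real.eulerMascheroniConstant / k * b * x)) *
        (Gammak k a) ^ lam /
        ((a + b * x) ^ lam * k ^ (-(lam / k * b * x)) * (1 - q) ^ (-(mu / k * b * x)) *
          (Gammaqk q k a) ^ mu) <
      (Gammak k (a + b * x)) ^ lam / (Gammaqk q k (a + b * x)) ^ mu ∧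
    (Gammak k (a + b * x)) ^ lam / (Gammaqk q k (a + b * x)) ^ mu <
      (a + b * y) ^ lam * Real.exp (lam * Real.eulerMascheroniConstant / k * b * (y - x)) *
        (Gammak k (a + b * y)) ^ lam /
        ((a + b * x) ^ lam * k ^ (lam / k * b * (y - x)) * (1 - q) ^ (mu / k * b * (y - x)) *
          (Gammaqk q k (a + b * y)) ^ mu) :=
  stmt15_general a b ha hb k hk q hq lam mu hlam hmu x y hx hxy
end
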